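/- Under the assumptions of the polynomial action of A_{r,s}(n) on P(n) = K[z_1,…,z_n], and assuming in addition that for each i the only (p,q) ∈ ℤ² with r_i^p = s_i^q is (0,0), the module P(n) is simple: any nonzero subspace of P(n) invariant under all the operators ρ_i^{±1}, σ_i^{±1}, x_i, y_i equals P(n). -/

import Mathlib

/-!
The operators `ρ_i` act diagonally on the monomial basis with eigenvalues `r_i ^ k_i`, and these
separate monomials because `r_i` is not a root of unity. Subtracting an eigenvalue multiple from a
vector kills part of its support, so a vector of minimal support in a nonzero invariant subspace
is a multiple of a monomial. Since `[m]_i ≠ 0` for `m > 0`, the lowering operators `y_i` carry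
that monomial down to `z(0)`, and the raising operators `x_i` then produce every monomial.
-/

/-- Build a linear operator on `ι →₀ K` from its values on the basis. -/
noncomputable def mkOp {K : Type*} [Field K] {ι : Type*} (f : ι → (ι →₀ K)) :
    (ι →₀ K) →ₗ[K] (ι →₀ K) :=
  Finsupp.lsum K fun k => LinearMap.toSpanSingleton K (ι →₀ K) (f k)

/-- The quantum-type integer `[m] = (r^{2m} - s^{2m})/(r² - s²)`. -/
noncomputable def qint {K : Type*} [Field K] (r s : K) (m : ℕ) : K :=
  (r ^ (2 * m) - s ^ (2 * m)) / (r ^ 2 - s ^ 2)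

section ops
variable {K : Type*} [Field K] {n : ℕ}

/-- `ρ_i z(k) = r_i^{k_i} z(k)` (with eigenvalue parameter `r`). -/
noncomputable def rhoOp (r : Fin n → K) (i : Fin n) :
    ((Fin n → ℕ) →₀ K) →ₗ[K] ((Fin n → ℕ) →₀ K) :=
  mkOp fun k => Finsupp.single k (r i ^ k i)

/-- inverse of `rhoOp`. -/
noncomputable def rhoInvOp (r : Fin n → K) (i : Fin n) :
    ((Fin n → ℕ) →₀ K) →ₗ[K] ((Fin n → ℕ) →₀ K) :=
  mkOp fun k => Finsupp.single k ((r i)⁻¹ ^ k i)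

/-- `x_i z(k) = z(k + ε_i)`. -/
noncomputable def xOp (i : Fin n) :
    ((Fin n → ℕ) →₀ K) →ₗ[K] ((Fin n → ℕ) →₀ K) :=
  mkOp fun k => Finsupp.single (Function.update k i (k i + 1)) (1 : K)

/-- `y_i z(k) = [k_i]_i z(k - ε_i)` (zero when `k_i = 0`, since `[0] = 0`). -/
noncomputable def yOp (r s : Fin n → K) (i : Fin n) :
    ((Fin n → ℕ) →₀ K) →ₗ[K] ((Fin n → ℕ) →₀ K) :=
  mkOp fun k => qint (r i) (s i) (k i) • Finsupp.single (Function.update k i (k i - 1)) (1 : K)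

end ops

open Finsupp Finset Function

section DiagonalOperators

variable {K ι : Type*} [Field K]

lemma mkOp_single (f : ι → ι →₀ K) (k : ι) (c : K) : mkOp f (single k c) = c • f k := by
  simp [mkOp]

noncomputable def diagOp (u : ι → K) : (ι →₀ K) →ₗ[K] (ι →₀ K) :=
  mkOp fun k => single k (u k)

@[simp]
lemma diagOp_apply (u : ι → K) (v : ι →₀ K) (m : ι) : diagOp u v m = u m * v m := by
  induction v using Finsupp.induction_linear with
  | zero => simp
  | add v w hv hw => simp [hv, hw, mul_add]
  | single k c => by_cases h : k = m <;> simp [diagOp, mkOp_single, h, mul_comm]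

theorem Submodule.exists_single_mem_of_diagOp_mem {α : Type*} (W : Submodule K (ι →₀ K))
    (χ : α → ι → K) (hsep : ∀ k k', k ≠ k' → ∃ a, χ a k ≠ χ a k')
    (hW : ∀ a, ∀ v ∈ W, diagOp (χ a) v ∈ W) (hne : W ≠ ⊥) : ∃ k, single k 1 ∈ W := by
  obtain ⟨v, hvW, hv⟩ := W.exists_mem_ne_zero_of_ne_bot hne
  induction hN : #v.support using Nat.strong_induction_on generalizing v with
  | _ N ih =>
  obtain ⟨k, hk⟩ | ⟨k, hk, k', hk', hkk'⟩ :=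
    (support_nonempty_iff.mpr hv).exists_eq_singleton_or_nontrivial
  · obtain ⟨hvk, hv_eq⟩ := support_eq_singleton.mp hk
    refine ⟨k, ?_⟩
    have : single k (1 : K) = (v k)⁻¹ • v := by
      rw [hv_eq, smul_single, smul_eq_mul, single_eq_same, inv_mul_cancel₀ hvk]
    exact this ▸ W.smul_mem _ hvW
  · classical
    obtain ⟨a, ha⟩ := hsep k k' hkk'
    set w := diagOp (χ a) v - χ a k' • v
    have hw_apply (m : ι) : w m = (χ a m - χ a k') * v m := by simp [w, sub_mul]
    have hk_mem : k ∈ w.support := by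
      rw [mem_support_iff, hw_apply]
      exact mul_ne_zero (sub_ne_zero.mpr ha) (mem_support_iff.mp hk)
    have hsub : w.support ⊆ v.support.erase k' := by
      intro m hm
      rw [mem_support_iff, hw_apply] at hm
      refine mem_erase.mpr ⟨?_, mem_support_iff.mpr (right_ne_zero_of_mul hm)⟩
      rintro rfl
      simp at hm
    have hlt : #w.support < N := hN ▸ (card_le_card hsub).trans_lt (card_erase_lt_of_mem hk')
    exact ih _ hlt w (W.sub_mem (hW a v hvW) (W.smul_mem _ hvW))
      (support_nonempty_iff.mp ⟨k, hk_mem⟩) rfl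

end DiagonalOperators

theorem Submodule.eq_top_of_forall_single_mem {K ι : Type*} [Field K] (W : Submodule K (ι →₀ K))
    (h : ∀ k, single k 1 ∈ W) : W = ⊤ := by
  rw [eq_top_iff, ← Finsupp.basisSingleOne.span_eq, Submodule.span_le]
  rintro _ ⟨k, rfl⟩
  simpa using h k

theorem forall_of_update_pred_of_update_succ {ι : Type*} [Finite ι] [DecidableEq ι]
    {P : (ι → ℕ) → Prop} (hpred : ∀ k i, P k → P (update k i (k i - 1)))
    (hsucc : ∀ k i, P k → P (update k i (k i + 1))) {k₀ : ι → ℕ} (h₀ : P k₀) (k : ι → ℕ) :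
    P k := by
  have hzero : P 0 := by
    induction k₀ using WellFoundedLT.induction with
    | _ k₀ ih =>
    by_cases hk : k₀ = 0
    · exact hk ▸ h₀
    obtain ⟨i, hi⟩ := ne_iff.mp hk
    exact ih _ (update_lt_self_iff.mpr (Nat.sub_one_lt hi)) (hpred k₀ i h₀)
  induction k using WellFoundedLT.induction with
  | _ k ih =>
  by_cases hk : k = 0
  · exact hk ▸ hzero
  obtain ⟨i, hki⟩ := ne_iff.mp hk
  have := hsucc _ i (ih _ (update_lt_self_iff.mpr (Nat.sub_one_lt hki)))
  rwa [Function.update_self, Function.update_idem, Nat.sub_one_add_one hki, update_eq_self] at this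

lemma pow_injective_of_zpow_eq_zpow {K : Type*} [Field K] {r s : K} (hr : r ≠ 0)
    (hpq : ∀ p q : ℤ, r ^ p = s ^ q → p = 0 ∧ q = 0) : Injective (r ^ · : ℕ → K) := by
  intro a b hab
  have hsub : r ^ ((a : ℤ) - b) = s ^ (0 : ℤ) := by
    simp only at hab
    rw [zpow_sub₀ hr, zpow_natCast, zpow_natCast, hab, div_self (pow_ne_zero _ hr), zpow_zero]
  have := (hpq _ _ hsub).1
  omega

lemma qint_ne_zero {K : Type*} [Field K] {r s : K} (hrs : r ^ 2 ≠ s ^ 2)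
    (hpq : ∀ p q : ℤ, r ^ p = s ^ q → p = 0 ∧ q = 0) {m : ℕ} (hm : m ≠ 0) : qint r s m ≠ 0 := by
  have hnum : r ^ (2 * m) ≠ s ^ (2 * m) := fun h => by
    have := (hpq (2 * m : ℕ) (2 * m : ℕ) (by rw [zpow_natCast, zpow_natCast, h])).1
    omega
  exact div_ne_zero (sub_ne_zero.mpr hnum) (sub_ne_zero.mpr hrs)

section PolynomialModule

variable {K : Type*} [Field K] {n : ℕ}

lemma xOp_single (i : Fin n) (k : Fin n → ℕ) :
    xOp i (single k (1 : K)) = single (update k i (k i + 1)) 1 := by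
  rw [xOp, mkOp_single, one_smul]

lemma yOp_single (r s : Fin n → K) (i : Fin n) (k : Fin n → ℕ) :
    yOp r s i (single k 1) = qint (r i) (s i) (k i) • single (update k i (k i - 1)) 1 := by
  rw [yOp, mkOp_single, one_smul]

lemma single_update_pred_mem {r s : Fin n → K} (hrs : ∀ i, r i ^ 2 ≠ s i ^ 2)
    (hpq : ∀ i, ∀ p q : ℤ, r i ^ p = s i ^ q → p = 0 ∧ q = 0) {W : Submodule K ((Fin n → ℕ) →₀ K)}
    (hW : ∀ i, ∀ v ∈ W, yOp r s i v ∈ W) {k : Fin n → ℕ} (hk : single k 1 ∈ W) (i : Fin n) :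
    single (update k i (k i - 1)) 1 ∈ W := by
  by_cases hki : k i = 0
  · rwa [hki, Nat.zero_sub, ← hki, update_eq_self]
  have hy := hW i _ hk
  rw [yOp_single] at hy
  simpa [smul_smul, inv_mul_cancel₀ (qint_ne_zero (hrs i) (hpq i) hki)] using
    W.smul_mem (qint (r i) (s i) (k i))⁻¹ hy

end PolynomialModule

theorem stmt6_general {K : Type*} [Field K] (n : ℕ)
    (r s : Fin n → K) (hr : ∀ i, r i ≠ 0)
    (hrs : ∀ i, (r i) ^ 2 ≠ (s i) ^ 2)
    (hpq : ∀ i, ∀ p q : ℤ, (r i) ^ p = (s i) ^ q → p = 0 ∧ q = 0)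
    (W : Submodule K ((Fin n → ℕ) →₀ K))
    (hinv : ∀ i : Fin n, ∀ v ∈ W,
      rhoOp r i v ∈ W ∧ rhoInvOp r i v ∈ W ∧ rhoOp s i v ∈ W ∧ rhoInvOp s i v ∈ W ∧
      xOp i v ∈ W ∧ yOp r s i v ∈ W)
    (hW : W ≠ ⊥) :
    W = ⊤ := by
  have hsep (k k' : Fin n → ℕ) (hkk' : k ≠ k') : ∃ i, r i ^ k i ≠ r i ^ k' i := by
    obtain ⟨i, hi⟩ := ne_iff.mp hkk'
    exact ⟨i, (pow_injective_of_zpow_eq_zpow (hr i) (hpq i)).ne hi⟩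
  obtain ⟨k₀, hk₀⟩ := W.exists_single_mem_of_diagOp_mem (fun i k => r i ^ k i) hsep
    (fun i v hv => (hinv i v hv).1) hW
  refine W.eq_top_of_forall_single_mem (forall_of_update_pred_of_update_succ ?_ ?_ hk₀)
  · exact fun k i hk => single_update_pred_mem hrs hpq (fun i v hv => (hinv i v hv).2.2.2.2.2) hk i
  · exact fun k i hk => xOp_single (K := K) i k ▸ (hinv i _ hk).2.2.2.2.1

/-- under Assumption 1.1 (`r_i^p = s_i^q` only for `(p,q) = (0,0)`),
the polynomial module `P(n)` is a simple module for `A_{r,s}(n)`: any nonzero subspace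
invariant under all the operators `ρ_i^{±1}, σ_i^{±1}, x_i, y_i` is everything. -/
theorem stmt6 {K : Type*} [Field K] (n : ℕ) (hn : 1 ≤ n)
    (r s : Fin n → K) (hr : ∀ i, r i ≠ 0) (hs : ∀ i, s i ≠ 0)
    (hrs : ∀ i, (r i) ^ 2 ≠ (s i) ^ 2)
    (hpq : ∀ i, ∀ p q : ℤ, (r i) ^ p = (s i) ^ q → p = 0 ∧ q = 0)
    (W : Submodule K ((Fin n → ℕ) →₀ K))
    (hinv : ∀ i : Fin n, ∀ v ∈ W,
      rhoOp r i v ∈ W ∧ rhoInvOp r i v ∈ W ∧ rhoOp s i v ∈ W ∧ rhoInvOp s i v ∈ W ∧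
      xOp i v ∈ W ∧ yOp r s i v ∈ W)
    (hW : W ≠ ⊥) :
    W = ⊤ :=
  stmt6_general n r s hr hrs hpq W hinv hW
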